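/- arXiv:1605.07068 — 4 statements merged into one kernel-verified Lean document; each statement's English description precedes it below -/
import Mathlib

section
/- There exists a model for the logic CTT_qe; that is, there is an interpretation M = ({D_α | α ∈ T}, I) of CTT_qe together with a valuation function V^M such that for every assignment φ into the frame of M and every expression C_γ of type γ, V^M_φ(C_γ) ∈ D_γ and the six model conditions hold: (1) V^M_φ(x_γ) = φ(x_γ) for variables, (2) V^M_φ(c_γ) = I(c_γ) for constants, (3) V^M_φ(F A) = V^M_φ(F)(V^M_φ(A)) for applications, (4) V^M_φ(λx_α. B_β) is the function sending d ∈ D_α to V^M_{φ[x_α ↦ d]}(B_β), (5) V^M_φ(⌜A_α⌝) = E(A_α) for quotations, and (6) whenever V^M_φ(is-expr^β A_ε) = T, V^M_φ(⟦A_ε⟧_β) = V^M_φ(E^{-1}(V^M_φ(A_ε))). -/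
namespace CTTqe

/-- Types of CTT_qe: individuals, truth values, constructions, function types. -/
inductive Ty : Type
  | iota : Ty
  | o : Ty
  | eps : Ty
  | arr : Ty → Ty → Ty
  deriving DecidableEq

/-- The logical constants of CTT_qe. -/
inductive LogConst : Ty → Type
  | eq (α : Ty) : LogConst (α.arr (α.arr .o))
  | isVar : LogConst (Ty.eps.arr .o)
  | isCon : LogConst (Ty.eps.arr .o)
  | appC : LogConst (Ty.eps.arr (Ty.eps.arr .eps))
  | absC : LogConst (Ty.eps.arr (Ty.eps.arr .eps))
  | quoC : LogConst (Ty.eps.arr .eps)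
  | isExpr (α : Ty) : LogConst (Ty.eps.arr .o)

/-- Constants: the logical constants plus denumerably many nonlogical constants
of each type. -/
inductive Const : Ty → Type
  | log {α : Ty} : LogConst α → Const α
  | nonlog (n : ℕ) (α : Ty) : Const α

/-- Eval-free expressions of CTT_qe: built from typed variables and constants by
application, abstraction, and quotation (of eval-free expressions). -/
inductive EExpr : Ty → Type
  | var (n : ℕ) (α : Ty) : EExpr α
  | con {α : Ty} : Const α → EExpr α
  | app {α β : Ty} : EExpr (α.arr β) → EExpr α → EExpr β
  | lam (n : ℕ) (α : Ty) {β : Ty} (B : EExpr β) : EExpr (α.arr β)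
  | quot {α : Ty} : EExpr α → EExpr Ty.eps

/-- Expressions of CTT_qe: as above, plus typed evaluation ⟦A_ε⟧_β.
Quotation may only be applied to eval-free expressions. -/
inductive Expr : Ty → Type
  | var (n : ℕ) (α : Ty) : Expr α
  | con {α : Ty} : Const α → Expr α
  | app {α β : Ty} : Expr (α.arr β) → Expr α → Expr β
  | lam (n : ℕ) (α : Ty) {β : Ty} (B : Expr β) : Expr (α.arr β)
  | quot {α : Ty} : EExpr α → Expr Ty.eps
  | eval : Expr Ty.eps → (β : Ty) → Expr β

/-- An eval-free expression is in particular an expression. -/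
def EExpr.toExpr : {α : Ty} → EExpr α → Expr α
  | _, .var n α => .var n α
  | _, .con c => .con c
  | _, .app F A => .app F.toExpr A.toExpr
  | _, .lam n α B => .lam n α B.toExpr
  | _, .quot A => .quot A

/-- Constructions of CTT_qe: generated from quotations of variables and constants
by the syntax constructors app, abs, quo. -/
inductive Construction : Type
  | quotVar (n : ℕ) (α : Ty) : Construction
  | quotCon {α : Ty} (c : Const α) : Construction
  | app : Construction → Construction → Construction
  | abs : Construction → Construction → Construction
  | quo : Construction → Construction

/-- The map E from eval-free expressions to constructions:
E(x_α) = ⌜x_α⌝, E(c_α) = ⌜c_α⌝, E(F A) = app E(F) E(A),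
E(λx. B) = abs E(x) E(B), E(⌜A⌝) = quo E(A). -/
def EExpr.toConstruction : {α : Ty} → EExpr α → Construction
  | _, .var n α => .quotVar n α
  | _, .con c => .quotCon c
  | _, .app F A => .app F.toConstruction A.toConstruction
  | _, .lam n α B => .abs (.quotVar n α) B.toConstruction
  | _, .quot A => .quo A.toConstruction

/-- A construction, regarded as an (eval-free) expression of type ε. -/
def Construction.toEExpr : Construction → EExpr Ty.eps
  | .quotVar n α => .quot (.var n α)
  | .quotCon c => .quot (.con c)
  | .app A B => .app (.app (.con (.log .appC)) A.toEExpr) B.toEExpr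
  | .abs A B => .app (.app (.con (.log .absC)) A.toEExpr) B.toEExpr
  | .quo A => .app (.con (.log .quoC)) A.toEExpr

/-- A frame of CTT_qe is determined by a nonempty domain of individuals. -/
structure Frame where
  Dι : Type
  nonempty : Nonempty Dι

/-- The domains of a frame: D_ι is the individuals, D_o the truth values,
D_ε the constructions, and D_{α→β} the set of ALL total functions D_α → D_β. -/
def Frame.Dom (F : Frame) : Ty → Type
  | .iota => F.Dι
  | .o => Bool
  | .eps => Construction
  | .arr α β => F.Dom α → F.Dom β

/-- An interpretation: a frame together with an interpretation function on
constants satisfying the seven conditions on the logical constants. -/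
structure Interp extends Frame where
  I : ∀ {α : Ty}, Const α → toFrame.Dom α
  I_eq : ∀ (α : Ty) (d₁ d₂ : toFrame.Dom α),
    I (.log (.eq α)) d₁ d₂ = true ↔ d₁ = d₂
  I_isVar : ∀ c : Construction,
    I (.log .isVar) c = true ↔ ∃ (n : ℕ) (α : Ty), c = .quotVar n α
  I_isCon : ∀ c : Construction,
    I (.log .isCon) c = true ↔ ∃ (α : Ty) (k : Const α), c = .quotCon k
  I_app : ∀ A B : Construction, I (.log .appC) A B = Construction.app A B
  I_abs : ∀ A B : Construction, I (.log .absC) A B = Construction.abs A B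
  I_quo : ∀ A : Construction, I (.log .quoC) A = Construction.quo A
  I_isExpr : ∀ (α : Ty) (c : Construction),
    I (.log (.isExpr α)) c = true ↔ ∃ B : EExpr α, c = B.toConstruction

/-- An assignment into a frame maps each variable of type α to an element of D_α. -/
def Assignment (F : Frame) : Type := ℕ → ∀ α : Ty, F.Dom α

/-- φ[x ↦ d]. -/
def Assignment.update {F : Frame} (φ : Assignment F) (n : ℕ) (α : Ty)
    (d : F.Dom α) : Assignment F :=
  fun m β => if h : m = n ∧ β = α then cast ((congrArg F.Dom h.2).symm) d else φ m β

/-- A model of CTT_qe: an interpretation together with a valuation function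
satisfying the six model conditions. -/
structure Model extends Interp where
  V : Assignment toFrame → ∀ {γ : Ty}, Expr γ → toFrame.Dom γ
  V_var : ∀ (φ : Assignment toFrame) (n : ℕ) (α : Ty), V φ (.var n α) = φ n α
  V_con : ∀ (φ : Assignment toFrame) {α : Ty} (c : Const α), V φ (.con c) = I c
  V_app : ∀ (φ : Assignment toFrame) {α β : Ty} (F : Expr (α.arr β)) (A : Expr α),
    V φ (.app F A) = (V φ F) (V φ A)
  V_lam : ∀ (φ : Assignment toFrame) (n : ℕ) (α : Ty) {β : Ty} (B : Expr β)
    (d : toFrame.Dom α), V φ (.lam n α B) d = V (φ.update n α d) B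
  V_quot : ∀ (φ : Assignment toFrame) {α : Ty} (A : EExpr α),
    V φ (.quot A) = A.toConstruction
  V_eval : ∀ (φ : Assignment toFrame) (A : Expr Ty.eps) (β : Ty) (B : EExpr β),
    V φ (.app (.con (.log (.isExpr β))) A) = true →
    V φ A = B.toConstruction →
    V φ (.eval A β) = V φ B.toExpr

/-- A formula (expression of type o) is valid in a model if it denotes T
under every assignment. -/
def Model.Valid (M : Model) (A : Expr Ty.o) : Prop :=
  ∀ φ : Assignment M.toFrame, M.V φ A = true

/-- The equality formula A =_α B. -/
def eqExpr {α : Ty} (A B : Expr α) : Expr Ty.o :=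
  .app (.app (.con (.log (.eq α))) A) B



section ModelConstruction

open Classical in
/-- Decode a construction back to the eval-free expression it represents. -/
noncomputable def decode : Construction → Option (Σ α : Ty, EExpr α)
  | .quotVar n α => some ⟨α, .var n α⟩
  | .quotCon c => some ⟨_, .con c⟩
  | .app A B =>
    match decode A, decode B with
    | some ⟨.arr α β, F⟩, some ⟨α', X⟩ =>
      if h : α' = α then some ⟨β, .app F (h ▸ X)⟩ else none
    | _, _ => none
  | .abs (.quotVar n α) B =>
    match decode B with
    | some ⟨β, Bb⟩ => some ⟨.arr α β, .lam n α Bb⟩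
    | none => none
  | .abs (.quotCon _) _ => none
  | .abs (.app _ _) _ => none
  | .abs (.abs _ _) _ => none
  | .abs (.quo _) _ => none
  | .quo A =>
    match decode A with
    | some ⟨_, X⟩ => some ⟨.eps, .quot X⟩
    | none => none

theorem decode_toConstruction : ∀ {α : Ty} (B : EExpr α),
    decode B.toConstruction = some ⟨α, B⟩ := by
  intro α B
  induction B with
  | var n α => rfl
  | con c => rfl
  | app F A ihF ihA =>
    simp [EExpr.toConstruction, decode, ihF, ihA]
  | lam n α B ih =>
    simp [EExpr.toConstruction, decode, ih]
  | quot A ih =>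
    simp [EExpr.toConstruction, decode, ih]

/-- The concrete frame with `Unit` individuals. -/
def theFrame : Frame := ⟨Unit, ⟨()⟩⟩

/-- Default element of each domain. -/
noncomputable def defElem : ∀ α : Ty, theFrame.Dom α
  | .iota => ()
  | .o => false
  | .eps => .quotVar 0 .iota
  | .arr _ β => fun _ => defElem β

open Classical in
/-- The interpretation function for constants. -/
noncomputable def theI : ∀ {α : Ty}, Const α → theFrame.Dom α
  | _, .log (.eq _) => fun d₁ d₂ => decide (d₁ = d₂)
  | _, .log .isVar => fun c => decide (∃ (n : ℕ) (α : Ty), c = .quotVar n α)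
  | _, .log .isCon => fun c => decide (∃ (α : Ty) (k : Const α), c = .quotCon k)
  | _, .log .appC => Construction.app
  | _, .log .absC => Construction.abs
  | _, .log .quoC => Construction.quo
  | _, .log (.isExpr α) => fun c => decide (∃ B : EExpr α, c = B.toConstruction)
  | _, .nonlog _ α => defElem α

/-- Valuation of eval-free expressions. -/
noncomputable def valE : ∀ {γ : Ty}, EExpr γ → Assignment theFrame → theFrame.Dom γ
  | _, .var n α, φ => φ n α
  | _, .con c, _ => theI c
  | _, .app F A, φ => (valE F φ) (valE A φ)
  | _, .lam n α B, φ => fun d => valE B (φ.update n α d)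
  | _, .quot A, _ => A.toConstruction

/-- Valuation of arbitrary expressions. -/
noncomputable def val : ∀ {γ : Ty}, Expr γ → Assignment theFrame → theFrame.Dom γ
  | _, .var n α, φ => φ n α
  | _, .con c, _ => theI c
  | _, .app F A, φ => (val F φ) (val A φ)
  | _, .lam n α B, φ => fun d => val B (φ.update n α d)
  | _, .quot A, _ => A.toConstruction
  | _, .eval A β, φ =>
    match decode (val A φ) with
    | some ⟨β', B⟩ =>
      if h : β' = β then cast (congrArg theFrame.Dom h) (valE B φ) else defElem β
    | none => defElem β

theorem val_toExpr : ∀ {γ : Ty} (B : EExpr γ) (φ : Assignment theFrame),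
    val B.toExpr φ = valE B φ := by
  intro γ B
  induction B with
  | var n α => intro φ; rfl
  | con c => intro φ; rfl
  | app F A ihF ihA => intro φ; simp [EExpr.toExpr, val, valE, ihF, ihA]
  | lam n α B ih => intro φ; funext d; simp [EExpr.toExpr, val, valE, ih]
  | quot A ih => intro φ; rfl

end ModelConstruction

/-- There exists a model for CTT_qe: an interpretation
(a frame {D_α} with an interpretation function I satisfying the conditions on
the logical constants) together with a valuation function V such that for every
assignment φ and every expression C_γ, V_φ(C_γ) ∈ D_γ and the six model
conditions hold (all bundled in the structure `Model`). -/
theorem model_exists : Nonempty CTTqe.Model := by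
  refine ⟨{
    toFrame := theFrame
    I := theI
    I_eq := by intro α d₁ d₂; simp only [theI]; classical exact decide_eq_true_iff
    I_isVar := by intro c; simp only [theI]; classical exact decide_eq_true_iff
    I_isCon := by intro c; simp only [theI]; classical exact decide_eq_true_iff
    I_app := by intro A B; rfl
    I_abs := by intro A B; rfl
    I_quo := by intro A; rfl
    I_isExpr := by intro α c; simp only [theI]; classical exact decide_eq_true_iff
    V := fun φ _ C => val C φ
    V_var := by intro φ n α; rfl
    V_con := by intro φ α c; rfl
    V_app := by intro φ α β F A; rfl
    V_lam := by intro φ n α β B d; rfl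
    V_quot := by intro φ α A; rfl
    V_eval := ?_ }⟩
  intro φ A β B _ hA
  show val (.eval A β) φ = val B.toExpr φ
  simp only [val, hA, decode_toConstruction, val_toExpr]
  rfl

end CTTqe
end

section
/- Let M be a model for CTT_qe, let A_ε be a construction, and let φ be an assignment into the frame of M. Then V^M_φ(A_ε) = A_ε; that is, every construction denotes itself in every model under every assignment. -/
namespace CTTqe

namespace Model

variable (M : Model) (φ : Assignment M.toFrame)

theorem V_appC (A B : Expr Ty.eps) :
    M.V φ (.app (.app (.con (.log .appC)) A) B) = .app (M.V φ A) (M.V φ B) := by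
  rw [M.V_app, M.V_app, M.V_con]
  exact M.I_app _ _

theorem V_absC (A B : Expr Ty.eps) :
    M.V φ (.app (.app (.con (.log .absC)) A) B) = .abs (M.V φ A) (M.V φ B) := by
  rw [M.V_app, M.V_app, M.V_con]
  exact M.I_abs _ _

theorem V_quoC (A : Expr Ty.eps) :
    M.V φ (.app (.con (.log .quoC)) A) = .quo (M.V φ A) := by
  rw [M.V_app, M.V_con]
  exact M.I_quo _

end Model

/-- Every construction denotes itself in every model under
every assignment: V^M_φ(A_ε) = A_ε for every construction A_ε. -/
theorem construction_denotes_itself (M : Model) (A : Construction)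
    (φ : Assignment M.toFrame) :
    M.V φ A.toEExpr.toExpr = A := by
  induction A with
  | quotVar n α => exact M.V_quot φ (.var n α)
  | quotCon c => exact M.V_quot φ (.con c)
  | app A B ihA ihB => exact (M.V_appC φ _ _).trans (congrArg₂ _ ihA ihB)
  | abs A B ihA ihB => exact (M.V_absC φ _ _).trans (congrArg₂ _ ihA ihB)
  | quo A ihA => exact (M.V_quoC φ _).trans (congrArg _ ihA)

end CTTqe
end

section
/- Law of Quotation: For every eval-free expression A_α of CTT_qe, the formula ⌜A_α⌝ = E(A_α) is valid in every model of CTT_qe; that is, for every model M and every assignment φ, V^M_φ(⌜A_α⌝) = V^M_φ(E(A_α)). -/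
namespace CTTqe

namespace Model

variable (M : Model)

theorem valid_eqExpr_iff {α : Ty} (A B : Expr α) :
    M.Valid (eqExpr A B) ↔ ∀ φ, M.V φ A = M.V φ B := by
  simp only [Valid, eqExpr, M.V_app, M.V_con, M.I_eq]

theorem V_toEExpr_toExpr (φ : Assignment M.toFrame) (c : Construction) :
    M.V φ c.toEExpr.toExpr = c := by
  -- `simp` leaves goals whose sides differ only in `M.Dom .eps` versus `Construction`
  induction c with
  | quotVar n α => exact M.V_quot φ (.var n α)
  | quotCon k => exact M.V_quot φ (.con k)
  | app A B ihA ihB =>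
    simp only [Construction.toEExpr, EExpr.toExpr, M.V_app, M.V_con, ihA, ihB, M.I_app]; rfl
  | abs A B ihA ihB =>
    simp only [Construction.toEExpr, EExpr.toExpr, M.V_app, M.V_con, ihA, ihB, M.I_abs]; rfl
  | quo A ih => simp only [Construction.toEExpr, EExpr.toExpr, M.V_app, M.V_con, ih, M.I_quo]; rfl

theorem V_quot_eq_V_toConstruction (φ : Assignment M.toFrame) {α : Ty} (A : EExpr α) :
    M.V φ (.quot A) = M.V φ A.toConstruction.toEExpr.toExpr := by
  rw [M.V_quot, M.V_toEExpr_toExpr]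

end Model

/-- **Law of Quotation.** For every eval-free expression A_α, the
formula ⌜A_α⌝ = E(A_α) is valid in every model of CTT_qe; that is, for every
model M and every assignment φ, V^M_φ(⌜A_α⌝) = V^M_φ(E(A_α)). -/
theorem law_of_quotation {α : Ty} (A : EExpr α) (M : Model) :
    M.Valid (eqExpr (Expr.quot A) A.toConstruction.toEExpr.toExpr) ∧
    ∀ φ : Assignment M.toFrame,
      M.V φ (Expr.quot A) = M.V φ A.toConstruction.toEExpr.toExpr := by
  have hV (φ : Assignment M.toFrame) := M.V_quot_eq_V_toConstruction φ A
  exact ⟨(M.valid_eqExpr_iff _ _).2 hV, hV⟩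

end CTTqe
end

section
/- Law of Disquotation: For every eval-free expression A_α of CTT_qe, the formula ⟦⌜A_α⌝⟧_α = A_α is valid in every model of CTT_qe; that is, for every model M and every assignment φ, V^M_φ(⟦⌜A_α⌝⟧_α) = V^M_φ(A_α). -/
namespace CTTqe

/-- **Law of Disquotation.** For every eval-free expression A_α,
the formula ⟦⌜A_α⌝⟧_α = A_α is valid in every model of CTT_qe; that is, for
every model M and every assignment φ, V^M_φ(⟦⌜A_α⌝⟧_α) = V^M_φ(A_α). -/
theorem law_of_disquotation {α : Ty} (A : EExpr α) (M : Model) :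
    M.Valid (eqExpr (Expr.eval (Expr.quot A) α) A.toExpr) ∧
    ∀ φ : Assignment M.toFrame,
      M.V φ (Expr.eval (Expr.quot A) α) = M.V φ A.toExpr := by
  have key : ∀ φ : Assignment M.toFrame,
      M.V φ (Expr.eval (Expr.quot A) α) = M.V φ A.toExpr := by
    intro φ
    apply M.V_eval φ (Expr.quot A) α A
    · rw [M.V_app, M.V_con, M.V_quot]
      exact (M.I_isExpr α A.toConstruction).mpr ⟨A, rfl⟩
    · exact M.V_quot φ A
  refine ⟨fun φ => ?_, key⟩
  unfold eqExpr
  rw [M.V_app, M.V_app, M.V_con]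
  exact (M.I_eq α _ _).mpr (key φ)

end CTTqe
end
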